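/- arXiv:2304.11641 — 2 statements merged into one kernel-verified Lean document; each statement's English description precedes it below -/
import Mathlib

section
/- (Lexicographic semantics of prioritized conjunction) Let φ₁, φ₂ be PQCL formulas over Σ and suppose deg φ₁ w = some i, deg φ₂ w = some j, deg φ₁ w' = some i', deg φ₂ w' = some j'. Then d(w, φ₁ & φ₂) ≤ d(w', φ₁ & φ₂) if and only if (i, j) ≤ (i', j') in the lexicographic order on pairs (i.e., i < i', or i = i' and j ≤ j'). -/
inductive PQCL (A : Type*) where
  | atom : Set (List A) → PQCL A
  | odis : PQCL A → PQCL A → PQCL A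
  | pconj : PQCL A → PQCL A → PQCL A

namespace PQCL

variable {A : Type*}

/-- Optionality of a PQCL formula. -/
def opt : PQCL A → ℕ
  | atom _ => 1
  | odis φ₁ φ₂ => opt φ₁ + opt φ₂
  | pconj φ₁ φ₂ => opt φ₁ * opt φ₂

open Classical in
/-- Satisfaction degree of a word w.r.t. a PQCL formula (`none` = does not satisfy). -/
noncomputable def deg : PQCL A → List A → Option ℕ
  | atom L, w => if w ∈ L then some 1 else none
  | odis φ₁ φ₂, w =>
    match deg φ₁ w with
    | some k => some k
    | none =>
      match deg φ₂ w with
      | some n => some (n + opt φ₁)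
      | none => none
  | pconj φ₁ φ₂, w =>
    match deg φ₁ w, deg φ₂ w with
    | some i, some j => some (opt φ₂ * (i - 1) + j)
    | _, _ => none

/-- Dissatisfaction score of a word w.r.t. a PQCL formula. -/
noncomputable def dscore (w : List A) (φ : PQCL A) : ℚ :=
  match deg φ w with
  | some k => (k : ℚ) / (opt φ + 1)
  | none => 1

/-- Reward associated with a word w.r.t. a PQCL formula. -/
noncomputable def reward (w : List A) (φ : PQCL A) : ℕ :=
  match deg φ w with
  | some k => opt φ - k + 1
  | none => 0

end PQCL


namespace PQCL
variable {A : Type*}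

lemma one_le_opt (φ : PQCL A) : 1 ≤ opt φ := by
  induction φ with
  | atom L => simp [opt]
  | odis φ₁ φ₂ ih₁ ih₂ => simp [opt]; omega
  | pconj φ₁ φ₂ ih₁ ih₂ =>
    simp only [opt]
    exact Nat.one_le_iff_ne_zero.mpr (Nat.mul_ne_zero (by omega) (by omega))

lemma deg_bounds {φ : PQCL A} {w : List A} {k : ℕ} (h : deg φ w = some k) :
    1 ≤ k ∧ k ≤ opt φ := by
  induction φ generalizing k with
  | atom L =>
    simp [deg] at h
    rcases h with ⟨_, rfl⟩; simp [opt]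
  | odis φ₁ φ₂ ih₁ ih₂ =>
    simp only [deg] at h
    cases e₁ : deg φ₁ w with
    | some m => rw [e₁] at h; have := ih₁ e₁; simp at h; simp [opt]; omega
    | none =>
      rw [e₁] at h
      cases e₂ : deg φ₂ w with
      | some n => rw [e₂] at h; have := ih₂ e₂; simp at h; simp [opt]; omega
      | none => rw [e₂] at h; simp at h
  | pconj φ₁ φ₂ ih₁ ih₂ =>
    simp only [deg] at h
    cases e₁ : deg φ₁ w with
    | none => rw [e₁] at h; simp at h
    | some a =>
      cases e₂ : deg φ₂ w with
      | none => rw [e₁, e₂] at h; simp at h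
      | some b =>
        rw [e₁, e₂] at h
        simp at h
        obtain ⟨ha1, ha2⟩ := ih₁ e₁
        obtain ⟨hb1, hb2⟩ := ih₂ e₂
        subst h
        constructor
        · omega
        · simp only [opt]
          obtain ⟨a', rfl⟩ : ∃ a', a = a' + 1 := ⟨a - 1, by omega⟩
          simp only [Nat.add_sub_cancel]
          calc opt φ₂ * a' + b ≤ opt φ₂ * a' + opt φ₂ := by omega
            _ = opt φ₂ * (a' + 1) := by ring
            _ ≤ opt φ₂ * opt φ₁ := Nat.mul_le_mul_left _ ha2
            _ = opt φ₁ * opt φ₂ := Nat.mul_comm _ _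

lemma lex_arith (m a b j j' : ℕ) (hj : 1 ≤ j) (hjm : j ≤ m) (hj' : 1 ≤ j')
    (hjm' : j' ≤ m) :
    m * a + j ≤ m * b + j' ↔ a < b ∨ (a = b ∧ j ≤ j') := by
  rcases Nat.lt_trichotomy a b with h | h | h
  · simp only [h, true_or, iff_true]
    calc m * a + j ≤ m * a + m := by omega
      _ = m * (a + 1) := by ring
      _ ≤ m * b := Nat.mul_le_mul_left _ h
      _ ≤ m * b + j' := by omega
  · subst h; omega
  · have : m * b + j' < m * a + j := by
      calc m * b + j' ≤ m * b + m := by omega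
        _ = m * (b + 1) := by ring
        _ ≤ m * a := Nat.mul_le_mul_left _ h
        _ < m * a + j := by omega
    constructor
    · omega
    · rintro (h' | ⟨rfl, _⟩) <;> omega

end PQCL

theorem pconj_lex {A : Type*} (φ₁ φ₂ : PQCL A) (w w' : List A) (i j i' j' : ℕ)
    (h₁ : PQCL.deg φ₁ w = some i) (h₂ : PQCL.deg φ₂ w = some j)
    (h₁' : PQCL.deg φ₁ w' = some i') (h₂' : PQCL.deg φ₂ w' = some j') :
    PQCL.dscore w (PQCL.pconj φ₁ φ₂) ≤ PQCL.dscore w' (PQCL.pconj φ₁ φ₂) ↔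
      (i < i' ∨ (i = i' ∧ j ≤ j')) := by
  obtain ⟨hi1, hi2⟩ := PQCL.deg_bounds h₁
  obtain ⟨hj1, hj2⟩ := PQCL.deg_bounds h₂
  obtain ⟨hi1', hi2'⟩ := PQCL.deg_bounds h₁'
  obtain ⟨hj1', hj2'⟩ := PQCL.deg_bounds h₂'
  have hd : PQCL.deg (PQCL.pconj φ₁ φ₂) w = some (PQCL.opt φ₂ * (i - 1) + j) := by
    simp [PQCL.deg, h₁, h₂]
  have hd' : PQCL.deg (PQCL.pconj φ₁ φ₂) w' = some (PQCL.opt φ₂ * (i' - 1) + j') := by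
    simp [PQCL.deg, h₁', h₂']
  have hpos : (0 : ℚ) < PQCL.opt (PQCL.pconj φ₁ φ₂) + 1 := by positivity
  rw [PQCL.dscore, PQCL.dscore, hd, hd', div_le_div_iff_of_pos_right hpos,
    Nat.cast_le, PQCL.lex_arith _ _ _ _ _ hj1 hj2 hj1' hj2']
  obtain ⟨a, rfl⟩ : ∃ a, i = a + 1 := ⟨i - 1, by omega⟩
  obtain ⟨b, rfl⟩ : ∃ b, i' = b + 1 := ⟨i' - 1, by omega⟩
  simp
end

section
/- (Lemma 8) For every PQCL formula φ over Σ and every word w : List Σ, the dissatisfaction score and the reward satisfy d(w, φ) = 1 - R(w, φ) / (opt φ + 1) (as rationals); in particular d(w, φ) = 1 when R(w, φ) = 0, and d(w, φ) = 1 - R(w, φ)/(opt φ + 1) < 1 when R(w, φ) > 0. -/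
namespace PQCL

variable {A : Type*}

/-! The reward `opt φ - k + 1` uses truncated subtraction, so the identity
`k / (n + 1) = 1 - (n - k + 1) / (n + 1)` needs exactly the bound `k ≤ opt φ` on the
degree `k`; this bound is proved by induction on `φ`, the prioritized-conjunction case
`opt φ₂ * (i - 1) + j ≤ opt φ₂ * opt φ₁` using `1 ≤ opt φ₁`. -/

theorem opt_pos (φ : PQCL A) : 0 < opt φ := by
  induction φ with
  | atom L => exact Nat.one_pos
  | odis φ₁ φ₂ ih₁ _ => exact Nat.add_pos_left ih₁ _
  | pconj φ₁ φ₂ ih₁ ih₂ => exact Nat.mul_pos ih₁ ih₂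

theorem deg_le_opt {φ : PQCL A} {w : List A} {k : ℕ} (h : deg φ w = some k) : k ≤ opt φ := by
  induction φ generalizing k with
  | atom L =>
    by_cases hw : w ∈ L <;> simp_all [deg, opt]
  | odis φ₁ φ₂ ih₁ ih₂ =>
    rcases h₁ : deg φ₁ w with _ | i <;> rcases h₂ : deg φ₂ w with _ | j <;>
      simp only [deg, h₁, h₂, reduceCtorEq, Option.some.injEq] at h <;> subst h
    · exact Nat.add_le_add_right (ih₂ h₂) _ |>.trans_eq (Nat.add_comm _ _)
    all_goals exact (ih₁ h₁).trans (Nat.le_add_right _ _)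
  | pconj φ₁ φ₂ ih₁ ih₂ =>
    rcases h₁ : deg φ₁ w with _ | i <;> rcases h₂ : deg φ₂ w with _ | j <;>
      simp only [deg, h₁, h₂, reduceCtorEq, Option.some.injEq] at h
    subst h
    have hi : i - 1 + 1 ≤ opt φ₁ := by have := opt_pos φ₁; have := ih₁ h₁; omega
    calc opt φ₂ * (i - 1) + j
        ≤ opt φ₂ * (i - 1) + opt φ₂ := Nat.add_le_add_left (ih₂ h₂) _
      _ = opt φ₂ * (i - 1 + 1) := (Nat.mul_succ _ _).symm
      _ ≤ opt φ₂ * opt φ₁ := Nat.mul_le_mul_left _ hi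
      _ = opt (pconj φ₁ φ₂) := Nat.mul_comm _ _

theorem dscore_eq_one_sub_reward_div (w : List A) (φ : PQCL A) :
    dscore w φ = 1 - (reward w φ : ℚ) / (opt φ + 1) := by
  rcases h : deg φ w with _ | k
  · simp [dscore, reward, h]
  · simp only [dscore, reward, h]
    rw [Nat.cast_add, Nat.cast_sub (deg_le_opt h)]
    field_simp
    ring

end PQCL

theorem dscore_eq_one_sub_reward {A : Type*} (φ : PQCL A) (w : List A) :
    PQCL.dscore w φ = 1 - (PQCL.reward w φ : ℚ) / (PQCL.opt φ + 1) ∧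
    (PQCL.reward w φ = 0 → PQCL.dscore w φ = 1) ∧
    (0 < PQCL.reward w φ →
      PQCL.dscore w φ = 1 - (PQCL.reward w φ : ℚ) / (PQCL.opt φ + 1) ∧
      PQCL.dscore w φ < 1) := by
  have h := PQCL.dscore_eq_one_sub_reward_div w φ
  refine ⟨h, fun h₀ => by simpa [h₀] using h, fun hpos => ⟨h, ?_⟩⟩
  have : 0 < (PQCL.reward w φ : ℚ) / (PQCL.opt φ + 1) := by positivity
  linarith
end
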